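/- Let X and V be independent random variables, V with E[V]=0, E[V²]=1, and let μ, σ, K, f be as in the kernel regression setup with σ bounded and f a bounded continuous density of X, K bounded with compact support. Define Y = μ(X) + σ(X)V and Tₙ = (1/(n bₙ f(x))) Σ_{j=1}^n σ(Xⱼ)Vⱼ K((x−Xⱼ)/bₙ), where (Xⱼ, Vⱼ) are copies of (X, V) with Vⱼ i.i.d. and independent of (Xⱼ). Then E[Tₙ] = 0 and n bₙ Var(Tₙ) = (1/(bₙ f(x)²)) E[σ(X₁)² K²((x−X₁)/bₙ)] + cross terms that vanish, and if moreover the Vⱼ are independent of each other and of all Xⱼ, then n bₙ Var(Tₙ) → σ²(x) ‖K‖²_{L²} / f(x) as bₙ → 0. -/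

import Mathlib

/-!
Write `T n = c * ∑ j, Z j * V j` with weights `Z j = σ (X j) * K ((x - X j) / b n)`, which are
bounded and measurable with respect to the `X`'s, hence independent of the whole noise sequence.
Since `E V = 0`, this independence kills the mean and, together with the independence of the `V j`,
every cross term of `E (∑ Z j V j)²`; as `E V² = 1` what remains is `∑ E (Z j)²`. Through the
density of `X j` and the substitution `y = x - b z`, each `E (Z j)²` equals
`b * ∫ f (x - b z) σ (x - b z)² K z² dz`, and dominated convergence sends the last integral to
`f x * σ x ^ 2 * ∫ K²`.
-/

open MeasureTheory ProbabilityTheory Filter Topology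

theorem integral_comp_eq_integral_mul_of_map_eq_withDensity {Ω : Type*} [MeasurableSpace Ω]
    {P : Measure Ω} {Y : Ω → ℝ} {f : ℝ → ℝ} (hY : Measurable Y) (hf : Measurable f)
    (hf0 : ∀ y, 0 ≤ f y) (hlaw : P.map Y = volume.withDensity fun y => ENNReal.ofReal (f y))
    {φ : ℝ → ℝ} (hφ : Measurable φ) :
    ∫ ω, φ (Y ω) ∂P = ∫ y, f y * φ y := by
  rw [← integral_map hY.aemeasurable hφ.aestronglyMeasurable, hlaw,
    integral_withDensity_eq_integral_toReal_smul hf.ennreal_ofReal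
      (.of_forall fun _ => ENNReal.ofReal_lt_top)]
  simp [ENNReal.toReal_ofReal (hf0 _)]

theorem integral_mul_comp_sub_div (F L : ℝ → ℝ) (x : ℝ) {b : ℝ} (hb : 0 < b) :
    ∫ y, F y * L ((x - y) / b) = b * ∫ z, F (x - b * z) * L z := by
  have hsubst : ∀ y, F y * L ((x - y) / b) = F (x - b * ((x - y) / b)) * L ((x - y) / b) := by
    intro y
    rw [mul_div_cancel₀ _ hb.ne', sub_sub_cancel]
  simp_rw [hsubst]
  rw [integral_sub_left_eq_self (fun u => F (x - b * (u / b)) * L (u / b)) volume x,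
    Measure.integral_comp_div (fun z => F (x - b * z) * L z), abs_of_pos hb, smul_eq_mul]

theorem tendsto_integral_comp_sub_mul_mul {ι : Type*} {l : Filter ι} [l.IsCountablyGenerated]
    {F L : ℝ → ℝ} {x C : ℝ} {b : ι → ℝ} (hF : Measurable F) (hFC : ∀ y, |F y| ≤ C)
    (hFx : ContinuousAt F x) (hL : Integrable L) (hb : Tendsto b l (𝓝 0)) :
    Tendsto (fun i => ∫ z, F (x - b i * z) * L z) l (𝓝 (F x * ∫ z, L z)) := by
  rw [← integral_const_mul]
  refine tendsto_integral_filter_of_dominated_convergence (fun z => C * |L z|)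
    (.of_forall fun i => (hF.comp (by fun_prop)).aestronglyMeasurable.mul hL.aestronglyMeasurable)
    (.of_forall fun i => .of_forall fun z => ?_) (hL.abs.const_mul C) (.of_forall fun z => ?_)
  · rw [norm_mul, Real.norm_eq_abs, Real.norm_eq_abs]
    exact mul_le_mul_of_nonneg_right (hFC _) (abs_nonneg _)
  · refine (hFx.tendsto.comp ?_).mul_const (L z)
    simpa using tendsto_const_nhds.sub (hb.mul_const z)

theorem integral_sq_kernel_weight_eq {Ω : Type*} [MeasurableSpace Ω] {P : Measure Ω}
    {Y : Ω → ℝ} {f σ K : ℝ → ℝ} (hY : Measurable Y) (hf : Measurable f) (hf0 : ∀ y, 0 ≤ f y)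
    (hlaw : P.map Y = volume.withDensity fun y => ENNReal.ofReal (f y)) (hσ : Measurable σ)
    (hK : Measurable K) (x : ℝ) {b : ℝ} (hb : 0 < b) :
    ∫ ω, (σ (Y ω) * K ((x - Y ω) / b)) ^ 2 ∂P
      = b * ∫ z, f (x - b * z) * σ (x - b * z) ^ 2 * K z ^ 2 := by
  rw [integral_comp_eq_integral_mul_of_map_eq_withDensity hY hf hf0 hlaw
      (φ := fun y => (σ y * K ((x - y) / b)) ^ 2) (by fun_prop),
    ← integral_mul_comp_sub_div (fun y => f y * σ y ^ 2) (fun z => K z ^ 2) x hb]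
  congr 1; ext y; ring

theorem measurable_iSup_comap {ι Ω β : Type*} [mβ : MeasurableSpace β] (Y : ι → Ω → β) (j : ι) :
    Measurable[⨆ i, MeasurableSpace.comap (Y i) mβ] (Y j) :=
  (comap_measurable (Y j)).mono (le_iSup (fun i => MeasurableSpace.comap (Y i) mβ) j) le_rfl

theorem ProbabilityTheory.Indep.indepFun_of_measurable {Ω : Type*} [MeasurableSpace Ω]
    {P : Measure Ω} {m₁ m₂ : MeasurableSpace Ω} (h : Indep m₁ m₂ P) {F G : Ω → ℝ}
    (hF : Measurable[m₁] F) (hG : Measurable[m₂] G) : IndepFun F G P :=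
  indep_of_indep_of_le_right (indep_of_indep_of_le_left h hF.comap_le) hG.comap_le

theorem MeasureTheory.MemLp.bdd_mul {Ω : Type*} [MeasurableSpace Ω] {P : Measure Ω}
    {p : ENNReal} {Z V : Ω → ℝ} {C : ℝ} (hV : MemLp V p P) (hZ : AEStronglyMeasurable Z P)
    (hZC : ∀ ω, |Z ω| ≤ C) : MemLp (fun ω => Z ω * V ω) p P :=
  hV.mul (memLp_top_of_bound hZ C (.of_forall hZC))

section MultiplicativeNoise

variable {Ω : Type*} {mZ : MeasurableSpace Ω} [mΩ : MeasurableSpace Ω] {P : Measure Ω}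
  {V Z : ℕ → Ω → ℝ} (hV : ∀ j, Measurable (V j)) (hmZ : mZ ≤ mΩ) (hZ : ∀ j, Measurable[mZ] (Z j))
  (hindep : Indep (⨆ j, MeasurableSpace.comap (V j) inferInstance) mZ P)
include hV hmZ hZ hindep

theorem integral_mul_noise_eq_zero (hV0 : ∀ j, ∫ ω, V j ω ∂P = 0) (j : ℕ) :
    ∫ ω, Z j ω * V j ω ∂P = 0 := by
  rw [(hindep.indepFun_of_measurable (measurable_iSup_comap V j) (hZ j)).symm
    |>.integral_fun_mul_eq_mul_integral ((hZ j).mono hmZ le_rfl).aestronglyMeasurable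
      (hV j).aestronglyMeasurable, hV0 j, mul_zero]

theorem integral_mul_noise_mul_mul_noise_eq_zero (hiid : iIndepFun V P)
    (hV0 : ∀ j, ∫ ω, V j ω ∂P = 0) {j k : ℕ} (hjk : j ≠ k) :
    ∫ ω, (Z j ω * V j ω) * (Z k ω * V k ω) ∂P = 0 := by
  have hZmeas : ∀ i, Measurable (Z i) := fun i => (hZ i).mono hmZ le_rfl
  have hVV : ∫ ω, V j ω * V k ω ∂P = 0 := by
    rw [(hiid.indepFun hjk).integral_fun_mul_eq_mul_integral (hV j).aestronglyMeasurable
      (hV k).aestronglyMeasurable, hV0 j, zero_mul]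
  calc ∫ ω, (Z j ω * V j ω) * (Z k ω * V k ω) ∂P
      = ∫ ω, (V j ω * V k ω) * (Z j ω * Z k ω) ∂P := by congr 1; ext ω; ring
    _ = (∫ ω, V j ω * V k ω ∂P) * ∫ ω, Z j ω * Z k ω ∂P :=
      (hindep.indepFun_of_measurable ((measurable_iSup_comap V j).mul (measurable_iSup_comap V k))
        ((hZ j).mul (hZ k))).integral_fun_mul_eq_mul_integral
        ((hV j).mul (hV k)).aestronglyMeasurable ((hZmeas j).mul (hZmeas k)).aestronglyMeasurable
    _ = 0 := by rw [hVV, zero_mul]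

theorem integral_mul_noise_sq (hV1 : ∀ j, ∫ ω, V j ω ^ 2 ∂P = 1) (j : ℕ) :
    ∫ ω, (Z j ω * V j ω) ^ 2 ∂P = ∫ ω, Z j ω ^ 2 ∂P := by
  calc ∫ ω, (Z j ω * V j ω) ^ 2 ∂P = ∫ ω, V j ω ^ 2 * Z j ω ^ 2 ∂P := by congr 1; ext ω; ring
    _ = (∫ ω, V j ω ^ 2 ∂P) * ∫ ω, Z j ω ^ 2 ∂P :=
      (hindep.indepFun_of_measurable ((measurable_iSup_comap V j).pow_const 2)
        ((hZ j).pow_const 2)).integral_fun_mul_eq_mul_integral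
        ((hV j).pow_const 2).aestronglyMeasurable
        (((hZ j).mono hmZ le_rfl).pow_const 2).aestronglyMeasurable
    _ = ∫ ω, Z j ω ^ 2 ∂P := by rw [hV1 j, one_mul]

variable (hV2 : ∀ j, MemLp (V j) 2 P) {C : ℝ} (hZC : ∀ j ω, |Z j ω| ≤ C)
include hV2 hZC

omit hV hindep in
theorem memLp_mul_noise (j : ℕ) : MemLp (fun ω => Z j ω * V j ω) 2 P :=
  (hV2 j).bdd_mul ((hZ j).mono hmZ le_rfl).aestronglyMeasurable (hZC j)

theorem integral_sum_mul_noise_eq_zero [IsFiniteMeasure P] (hV0 : ∀ j, ∫ ω, V j ω ∂P = 0)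
    (s : Finset ℕ) : ∫ ω, ∑ j ∈ s, Z j ω * V j ω ∂P = 0 := by
  rw [integral_finsetSum _ fun j _ => (memLp_mul_noise hmZ hZ hV2 hZC j).integrable one_le_two]
  exact Finset.sum_eq_zero fun j _ => integral_mul_noise_eq_zero hV hmZ hZ hindep hV0 j

theorem integral_sq_sum_mul_noise (hiid : iIndepFun V P) (hV0 : ∀ j, ∫ ω, V j ω ∂P = 0)
    (hV1 : ∀ j, ∫ ω, V j ω ^ 2 ∂P = 1) (s : Finset ℕ) :
    ∫ ω, (∑ j ∈ s, Z j ω * V j ω) ^ 2 ∂P = ∑ j ∈ s, ∫ ω, Z j ω ^ 2 ∂P := by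
  have hint : ∀ j k, Integrable (fun ω => (Z j ω * V j ω) * (Z k ω * V k ω)) P := fun j k =>
    (memLp_mul_noise hmZ hZ hV2 hZC j).integrable_mul (memLp_mul_noise hmZ hZ hV2 hZC k)
  simp_rw [sq (∑ j ∈ s, _), Finset.sum_mul_sum]
  rw [integral_finsetSum _ fun j _ => integrable_finsetSum _ fun k _ => hint j k]
  refine Finset.sum_congr rfl fun j hj => ?_
  rw [integral_finsetSum _ fun k _ => hint j k, Finset.sum_eq_single_of_mem j hj fun k _ hkj =>
    integral_mul_noise_mul_mul_noise_eq_zero hV hmZ hZ hindep hiid hV0 hkj.symm]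
  simpa only [sq] using integral_mul_noise_sq hV hmZ hZ hindep hV1 j

theorem variance_const_mul_sum_mul_noise [IsFiniteMeasure P] (hiid : iIndepFun V P)
    (hV0 : ∀ j, ∫ ω, V j ω ∂P = 0) (hV1 : ∀ j, ∫ ω, V j ω ^ 2 ∂P = 1) (c : ℝ) (s : Finset ℕ) :
    variance (fun ω => c * ∑ j ∈ s, Z j ω * V j ω) P = c ^ 2 * ∑ j ∈ s, ∫ ω, Z j ω ^ 2 ∂P := by
  rw [variance_const_mul, variance_of_integral_eq_zero
    (Finset.aemeasurable_fun_sum s fun j _ => (memLp_mul_noise hmZ hZ hV2 hZC j).aemeasurable)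
    (integral_sum_mul_noise_eq_zero hV hmZ hZ hindep hV2 hZC hV0 s),
    integral_sq_sum_mul_noise hV hmZ hZ hindep hV2 hZC hiid hV0 hV1]

end MultiplicativeNoise

theorem stmt_16_general {Ω : Type*} [MeasurableSpace Ω] (P : Measure Ω)
    [IsProbabilityMeasure P]
    (σ K f : ℝ → ℝ) (A x : ℝ)
    (hKmeas : Measurable K) (hKbd : ∃ M, ∀ z, |K z| ≤ M)
    (hKsupp : ∀ z, z ∉ Set.Icc (-A) A → K z = 0)
    (hf : Continuous f) (hfbd : ∃ B, ∀ y, |f y| ≤ B)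
    (hfnn : ∀ y, 0 ≤ f y) (hfx : 0 < f x)
    (hσmeas : Measurable σ) (hσbd : ∃ M, ∀ y, |σ y| ≤ M)
    (hσcont : ContinuousAt (fun y => (σ y)^2) x)
    (X V : ℕ → Ω → ℝ)
    (hXmeas : ∀ j, Measurable (X j)) (hVmeas : ∀ j, Measurable (V j))
    (hXlaw : ∀ j, Measure.map (X j) P
      = MeasureTheory.volume.withDensity (fun y => ENNReal.ofReal (f y)))
    (hViid : iIndepFun V P)
    (hV2int : ∀ j, Integrable (fun ω => (V j ω)^2) P)
    (hVmean : ∀ j, ∫ ω, V j ω ∂P = 0) (hVvar : ∀ j, ∫ ω, (V j ω)^2 ∂P = 1)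
    (hindep : Indep (⨆ j, MeasurableSpace.comap (V j) inferInstance)
                    (⨆ j, MeasurableSpace.comap (X j) inferInstance) P)
    (b : ℕ → ℝ) (hb : ∀ n, 0 < b n) (hb0 : Tendsto b atTop (nhds 0))
    (T : ℕ → Ω → ℝ)
    (hT : ∀ n ω, T n ω = (1 / ((n : ℝ) * b n * f x)) *
      ∑ j ∈ Finset.range n, σ (X j ω) * V j ω * K ((x - X j ω) / b n)) :
    (∀ n, ∫ ω, T n ω ∂P = 0) ∧
    Tendsto (fun n : ℕ => (n : ℝ) * b n * variance (T n) P) atTop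
      (nhds ((σ x)^2 * (∫ z, (K z)^2) / f x)) := by
  obtain ⟨MK, hMK⟩ := hKbd
  obtain ⟨Mσ, hMσ⟩ := hσbd
  obtain ⟨B, hB⟩ := hfbd
  let Z : ℕ → ℕ → Ω → ℝ := fun n j ω => σ (X j ω) * K ((x - X j ω) / b n)
  have hTZ : ∀ n, T n = fun ω => 1 / (n * b n * f x) * ∑ j ∈ Finset.range n, Z n j ω * V j ω :=
    fun n => funext fun ω => by
      rw [hT]; congr 1; exact Finset.sum_congr rfl fun j _ => by ring
  have hmX := iSup_le fun j => (hXmeas j).comap_le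
  have hZm : ∀ n j, Measurable[⨆ i, MeasurableSpace.comap (X i) inferInstance] (Z n j) :=
    fun n j => (by fun_prop : Measurable fun y => σ y * K ((x - y) / b n)).comp
      (measurable_iSup_comap X j)
  have hZbd : ∀ n j ω, |Z n j ω| ≤ Mσ * MK := fun n j ω => (abs_mul _ _).trans_le
    (mul_le_mul (hMσ _) (hMK _) (abs_nonneg _) ((abs_nonneg _).trans (hMσ 0)))
  have hV2 : ∀ j, MemLp (V j) 2 P := fun j =>
    (memLp_two_iff_integrable_sq (hVmeas j).aestronglyMeasurable).2 (hV2int j)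
  refine ⟨fun n => ?_, ?_⟩
  · rw [hTZ, integral_const_mul, integral_sum_mul_noise_eq_zero hVmeas hmX (hZm n) hindep hV2
      (hZbd n) hVmean, mul_zero]
  have hvar : ∀ n : ℕ, 0 < n → n * b n * variance (T n) P
      = (∫ z, f (x - b n * z) * σ (x - b n * z) ^ 2 * K z ^ 2) / f x ^ 2 := fun n hn => by
    rw [hTZ, variance_const_mul_sum_mul_noise hVmeas hmX (hZm n) hindep hV2 (hZbd n) hViid hVmean
      hVvar, Finset.sum_congr rfl fun j _ => integral_sq_kernel_weight_eq (hXmeas j) hf.measurable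
      hfnn (hXlaw j) hσmeas hKmeas x (hb n), Finset.sum_const, Finset.card_range, nsmul_eq_mul]
    field_simp [(hb n).ne']
  have hFbd : ∀ y, |f y * σ y ^ 2| ≤ B * Mσ ^ 2 := fun y => by
    rw [abs_mul, abs_pow]
    exact mul_le_mul (hB y) (pow_le_pow_left₀ (abs_nonneg _) (hMσ y) 2) (by positivity)
      ((abs_nonneg _).trans (hB y))
  have hK2 : MemLp K 2 := (memLp_top_of_bound hKmeas.aestronglyMeasurable MK (.of_forall hMK)
    ).mono_exponent_of_measure_support_ne_top hKsupp measure_Icc_lt_top.ne le_top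
  have hlim := tendsto_integral_comp_sub_mul_mul (F := fun y => f y * σ y ^ 2)
    (hf.measurable.mul (hσmeas.pow_const 2)) hFbd (hf.continuousAt.mul hσcont) hK2.integrable_sq
    hb0
  convert (hlim.div_const (f x ^ 2)).congr' ?_ using 2
  · field_simp
  · filter_upwards [eventually_gt_atTop 0] with n hn using (hvar n hn).symm

theorem stmt_16 {Ω : Type*} [MeasurableSpace Ω] (P : Measure Ω)
    [IsProbabilityMeasure P]
    (μ σ K f : ℝ → ℝ) (A x : ℝ)
    (hKmeas : Measurable K) (hKbd : ∃ M, ∀ z, |K z| ≤ M)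
    (hKsupp : ∀ z, z ∉ Set.Icc (-A) A → K z = 0) (hKint : ∫ z, K z = 1)
    (hf : Continuous f) (hfbd : ∃ B, ∀ y, |f y| ≤ B)
    (hfnn : ∀ y, 0 ≤ f y) (hfdens : ∫ y, f y = 1) (hfx : 0 < f x)
    (hσmeas : Measurable σ) (hσbd : ∃ M, ∀ y, |σ y| ≤ M)
    (hσcont : ContinuousAt (fun y => (σ y)^2) x)
    (X V : ℕ → Ω → ℝ)
    (hXmeas : ∀ j, Measurable (X j)) (hVmeas : ∀ j, Measurable (V j))
    (hXlaw : ∀ j, Measure.map (X j) P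
      = MeasureTheory.volume.withDensity (fun y => ENNReal.ofReal (f y)))
    (hViid : iIndepFun V P)
    (hVint : ∀ j, Integrable (V j) P)
    (hV2int : ∀ j, Integrable (fun ω => (V j ω)^2) P)
    (hVmean : ∀ j, ∫ ω, V j ω ∂P = 0) (hVvar : ∀ j, ∫ ω, (V j ω)^2 ∂P = 1)
    (hindep : Indep (⨆ j, MeasurableSpace.comap (V j) inferInstance)
                    (⨆ j, MeasurableSpace.comap (X j) inferInstance) P)
    (b : ℕ → ℝ) (hb : ∀ n, 0 < b n) (hb0 : Tendsto b atTop (nhds 0))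
    (T : ℕ → Ω → ℝ)
    (hT : ∀ n ω, T n ω = (1 / ((n : ℝ) * b n * f x)) *
      ∑ j ∈ Finset.range n, σ (X j ω) * V j ω * K ((x - X j ω) / b n)) :
    (∀ n, ∫ ω, T n ω ∂P = 0) ∧
    Tendsto (fun n : ℕ => (n : ℝ) * b n * variance (T n) P) atTop
      (nhds ((σ x)^2 * (∫ z, (K z)^2) / f x)) :=
  stmt_16_general P σ K f A x hKmeas hKbd hKsupp hf hfbd hfnn hfx hσmeas hσbd hσcont X V hXmeas
    hVmeas hXlaw hViid hV2int hVmean hVvar hindep b hb hb0 T hT
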